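/- Let K be a field and n > 1. Let T_n(K) be the algebra of lower triangular n×n matrices over K and D_n(K) ⊆ T_n(K) its subalgebra of diagonal matrices. Then the minimum depth is d(D_n(K), T_n(K)) = 3. -/

import Mathlib

/-! # Depth of subring extensions (Kadison–Young)
For a unital subring `B ⊆ A`, `CC B n` realizes the `n`-fold relative tensor power
`C_n(A,B) = A ⊗_B ⋯ ⊗_B A` (with `C_0(A,B) = B`) as a quotient of the iterated
tensor power over `ℤ` by the middle `B`-balancing relations, together with its
natural left/right `A`- and `B`-actions.  Bimodule maps, the divisibility relation
`M ∣ q ⬝ N`, H-equivalence, the depth conditions and the minimum depth `d(B,A) ∈ ℕ∞`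
are then defined exactly as in the paper. -/

open TensorProduct

universe u

variable (A : Type u) [Ring A]

/-- `Tpow A n` is the `(n+1)`-fold tensor power `A ⊗ℤ ⋯ ⊗ℤ A`. -/
noncomputable def Tpow : ℕ → ModuleCat.{u} ℤ
  | 0 => ModuleCat.of ℤ A
  | n + 1 => ModuleCat.of ℤ (A ⊗[ℤ] (Tpow n : Type u))

/-- Multiplication by `a : A` on the leftmost tensor factor. -/
noncomputable def lmulT (a : A) : ∀ n, (Tpow A n : Type u) →ₗ[ℤ] (Tpow A n : Type u)
  | 0 => (LinearMap.mulLeft ℤ a : A →ₗ[ℤ] A)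
  | n + 1 => LinearMap.rTensor (Tpow A n : Type u) (LinearMap.mulLeft ℤ a)

/-- Multiplication by `a : A` on the rightmost tensor factor. -/
noncomputable def rmulT (a : A) : ∀ n, (Tpow A n : Type u) →ₗ[ℤ] (Tpow A n : Type u)
  | 0 => (LinearMap.mulRight ℤ a : A →ₗ[ℤ] A)
  | n + 1 => LinearMap.lTensor A (rmulT a n)

private theorem lmulT_succ_apply (a : A) (n : ℕ) (x : A ⊗[ℤ] (Tpow A n : Type u)) :
    lmulT A a (n+1) x = LinearMap.rTensor (Tpow A n : Type u) (LinearMap.mulLeft ℤ a) x := rfl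

private theorem rmulT_succ_apply (a : A) (n : ℕ) (x : A ⊗[ℤ] (Tpow A n : Type u)) :
    rmulT A a (n+1) x = LinearMap.lTensor A (rmulT A a n) x := rfl

private theorem auxcomm (M : Type u) [AddCommGroup M] [Module ℤ M] (a : A) (g : M →ₗ[ℤ] M)
    (x : A ⊗[ℤ] M) :
    (LinearMap.rTensor M (LinearMap.mulLeft ℤ a)) ((LinearMap.lTensor A g) x) =
    (LinearMap.lTensor A g) ((LinearMap.rTensor M (LinearMap.mulLeft ℤ a)) x) := by
  induction x using TensorProduct.induction_on with
  | zero => simp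
  | tmul c t => simp
  | add y z hy hz => simp only [map_add, hy, hz]

theorem lmulT_rmulT_comm (a b : A) : ∀ (n : ℕ) (x : (Tpow A n : Type u)),
    lmulT A a n (rmulT A b n x) = rmulT A b n (lmulT A a n x)
  | 0, x => (mul_assoc a x b).symm
  | n + 1, x => by
    show (lmulT A a (n+1)) ((rmulT A b (n+1)) x) = (rmulT A b (n+1)) ((lmulT A a (n+1)) x)
    rw [lmulT, rmulT]
    exact auxcomm A (Tpow A n : Type u) a (rmulT A b n) x

private theorem aux1 (M : Type u) [AddCommGroup M] [Module ℤ M] (a c d : A) (t s : M) :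
    LinearMap.rTensor M (LinearMap.mulLeft ℤ a) (c ⊗ₜ[ℤ] t - d ⊗ₜ[ℤ] s) =
      (a * c) ⊗ₜ[ℤ] t - (a * d) ⊗ₜ[ℤ] s := by simp

private theorem aux2 (M : Type u) [AddCommGroup M] [Module ℤ M] (g : M →ₗ[ℤ] M) (c d : A)
    (t s : M) :
    LinearMap.lTensor A g (c ⊗ₜ[ℤ] t - d ⊗ₜ[ℤ] s) = c ⊗ₜ[ℤ] (g t) - d ⊗ₜ[ℤ] (g s) := by simp

private theorem aux3 (M : Type u) [AddCommGroup M] [Module ℤ M] (a c : A) (t : M) :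
    LinearMap.rTensor M (LinearMap.mulLeft ℤ a) (c ⊗ₜ[ℤ] t) = (a * c) ⊗ₜ[ℤ] t := by simp

private theorem aux4 (M : Type u) [AddCommGroup M] [Module ℤ M] (g : M →ₗ[ℤ] M) (c : A) (t : M) :
    LinearMap.lTensor A g (c ⊗ₜ[ℤ] t) = c ⊗ₜ[ℤ] (g t) := by simp


variable {A}

/-- The `B`-balancing relations inside `Tpow A n`. -/
noncomputable def rel (B : Subring A) : ∀ n, Submodule ℤ (Tpow A n : Type u)
  | 0 => ⊥
  | n + 1 =>
      Submodule.span ℤ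
        {x : (Tpow A (n+1) : Type u) |
          (∃ (a : A) (b : B) (t : (Tpow A n : Type u)),
            x = ((a * (b : A)) ⊗ₜ[ℤ] t : A ⊗[ℤ] (Tpow A n : Type u)) -
                 a ⊗ₜ[ℤ] (lmulT A (b : A) n t)) ∨
          (∃ (a : A) (r : (Tpow A n : Type u)), r ∈ rel B n ∧
            x = (a ⊗ₜ[ℤ] r : A ⊗[ℤ] (Tpow A n : Type u)))}

theorem rel_succ (B : Subring A) (n : ℕ) :
    rel B (n+1) =
      Submodule.span ℤ
        {x : (Tpow A (n+1) : Type u) |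
          (∃ (a : A) (b : B) (t : (Tpow A n : Type u)),
            x = ((a * (b : A)) ⊗ₜ[ℤ] t : A ⊗[ℤ] (Tpow A n : Type u)) -
                 a ⊗ₜ[ℤ] (lmulT A (b : A) n t)) ∨
          (∃ (a : A) (r : (Tpow A n : Type u)), r ∈ rel B n ∧
            x = (a ⊗ₜ[ℤ] r : A ⊗[ℤ] (Tpow A n : Type u)))} := rfl

theorem rel_le_comap_lmulT (B : Subring A) (a : A) :
    ∀ n, rel B n ≤ (rel B n).comap (lmulT A a n)
  | 0 => bot_le
  | n + 1 => by
    rw [rel_succ, Submodule.span_le]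
    rintro x (⟨a', b, t, rfl⟩ | ⟨a', r, hr, rfl⟩) <;>
      refine Submodule.mem_comap.mpr ?_ <;> rw [lmulT_succ_apply]
    · rw [map_sub, LinearMap.rTensor_tmul, LinearMap.rTensor_tmul, LinearMap.mulLeft_apply,
        LinearMap.mulLeft_apply]
      refine Submodule.subset_span (Or.inl ⟨a * a', b, t, ?_⟩)
      rw [mul_assoc]
    · rw [LinearMap.rTensor_tmul, LinearMap.mulLeft_apply]
      exact Submodule.subset_span (Or.inr ⟨a * a', r, hr, rfl⟩)

theorem rel_le_comap_rmulT (B : Subring A) (a : A) :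
    ∀ n, rel B n ≤ (rel B n).comap (rmulT A a n)
  | 0 => bot_le
  | n + 1 => by
    rw [rel_succ, Submodule.span_le]
    rintro x (⟨a', b, t, rfl⟩ | ⟨a', r, hr, rfl⟩) <;>
      refine Submodule.mem_comap.mpr ?_ <;> rw [rmulT_succ_apply]
    · rw [map_sub, LinearMap.lTensor_tmul, LinearMap.lTensor_tmul, ← lmulT_rmulT_comm]
      exact Submodule.subset_span (Or.inl ⟨a', b, rmulT A a n t, rfl⟩)
    · rw [LinearMap.lTensor_tmul]
      exact Submodule.subset_span
        (Or.inr ⟨a', rmulT A a n r, rel_le_comap_rmulT B a n hr, rfl⟩)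

/-- `CC B n` is `C_n(A,B) = A ⊗_B ⋯ ⊗_B A` (`n` factors of `A`), with `CC B 0 = B`. -/
noncomputable def CC (B : Subring A) : ℕ → ModuleCat.{u} ℤ
  | 0 => ModuleCat.of ℤ B
  | n + 1 => ModuleCat.of ℤ ((Tpow A n : Type u) ⧸ rel B n)

/-- The left `A`-action on `C_{n+1}(A,B)`. -/
noncomputable def lA (B : Subring A) (a : A) (n : ℕ) :
    (CC B (n+1) : Type u) →ₗ[ℤ] (CC B (n+1) : Type u) :=
  (Submodule.mapQ _ _ (lmulT A a n) (rel_le_comap_lmulT B a n)).toAddMonoidHom.toIntLinearMap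

/-- The right `A`-action on `C_{n+1}(A,B)`. -/
noncomputable def rA (B : Subring A) (a : A) (n : ℕ) :
    (CC B (n+1) : Type u) →ₗ[ℤ] (CC B (n+1) : Type u) :=
  (Submodule.mapQ _ _ (rmulT A a n) (rel_le_comap_rmulT B a n)).toAddMonoidHom.toIntLinearMap

/-- The left `B`-action on `C_n(A,B)`. -/
noncomputable def lB (B : Subring A) (b : B) : ∀ n, (CC B n : Type u) →ₗ[ℤ] (CC B n : Type u)
  | 0 => (LinearMap.mulLeft ℤ b : B →ₗ[ℤ] B)
  | n + 1 => lA B (b : A) n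

/-- The right `B`-action on `C_n(A,B)`. -/
noncomputable def rB (B : Subring A) (b : B) : ∀ n, (CC B n : Type u) →ₗ[ℤ] (CC B n : Type u)
  | 0 => (LinearMap.mulRight ℤ b : B →ₗ[ℤ] B)
  | n + 1 => rA B (b : A) n

/-- `f` is a morphism of `B`-`B`-bimodules `C_m(A,B) → C_n(A,B)`. -/
def IsBBHom (B : Subring A) {m n : ℕ} (f : (CC B m : Type u) →ₗ[ℤ] (CC B n : Type u)) : Prop :=
  ∀ b : B, (∀ x, f (lB B b m x) = lB B b n (f x)) ∧ (∀ x, f (rB B b m x) = rB B b n (f x))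

/-- `f` is a morphism of `A`-`B`-bimodules `C_{m+1}(A,B) → C_{n+1}(A,B)`. -/
def IsABHom (B : Subring A) {m n : ℕ}
    (f : (CC B (m+1) : Type u) →ₗ[ℤ] (CC B (n+1) : Type u)) : Prop :=
  (∀ (a : A) x, f (lA B a m x) = lA B a n (f x)) ∧
  (∀ (b : B) x, f (rB B b (m+1) x) = rB B b (n+1) (f x))

/-- `f` is a morphism of `B`-`A`-bimodules `C_{m+1}(A,B) → C_{n+1}(A,B)`. -/
def IsBAHom (B : Subring A) {m n : ℕ}
    (f : (CC B (m+1) : Type u) →ₗ[ℤ] (CC B (n+1) : Type u)) : Prop :=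
  (∀ (b : B) x, f (lB B b (m+1) x) = lB B b (n+1) (f x)) ∧
  (∀ (a : A) x, f (rA B a m x) = rA B a n (f x))

/-- `C_m(A,B)` divides a multiple of `C_n(A,B)` as `B`-`B`-bimodules. -/
def DividesBB (B : Subring A) (m n : ℕ) : Prop :=
  ∃ (r : ℕ) (f : Fin r → ((CC B m : Type u) →ₗ[ℤ] (CC B n : Type u)))
    (g : Fin r → ((CC B n : Type u) →ₗ[ℤ] (CC B m : Type u))),
    (∀ i, IsBBHom B (f i)) ∧ (∀ i, IsBBHom B (g i)) ∧
      ∑ i, (g i).comp (f i) = LinearMap.id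

/-- `C_{m+1}(A,B)` divides a multiple of `C_{n+1}(A,B)` as `A`-`B`-bimodules. -/
def DividesAB (B : Subring A) (m n : ℕ) : Prop :=
  ∃ (r : ℕ) (f : Fin r → ((CC B (m+1) : Type u) →ₗ[ℤ] (CC B (n+1) : Type u)))
    (g : Fin r → ((CC B (n+1) : Type u) →ₗ[ℤ] (CC B (m+1) : Type u))),
    (∀ i, IsABHom B (f i)) ∧ (∀ i, IsABHom B (g i)) ∧
      ∑ i, (g i).comp (f i) = LinearMap.id

/-- `C_{m+1}(A,B)` divides a multiple of `C_{n+1}(A,B)` as `B`-`A`-bimodules. -/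
def DividesBA (B : Subring A) (m n : ℕ) : Prop :=
  ∃ (r : ℕ) (f : Fin r → ((CC B (m+1) : Type u) →ₗ[ℤ] (CC B (n+1) : Type u)))
    (g : Fin r → ((CC B (n+1) : Type u) →ₗ[ℤ] (CC B (m+1) : Type u))),
    (∀ i, IsBAHom B (f i)) ∧ (∀ i, IsBAHom B (g i)) ∧
      ∑ i, (g i).comp (f i) = LinearMap.id

/-- H-equivalence of `C_m` and `C_n` as `B`-`B`-bimodules. -/
def HequivBB (B : Subring A) (m n : ℕ) : Prop := DividesBB B m n ∧ DividesBB B n m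

/-- H-equivalence of `C_{m+1}` and `C_{n+1}` as `A`-`B`-bimodules. -/
def HequivAB (B : Subring A) (m n : ℕ) : Prop := DividesAB B m n ∧ DividesAB B n m

/-- H-equivalence of `C_{m+1}` and `C_{n+1}` as `B`-`A`-bimodules. -/
def HequivBA (B : Subring A) (m n : ℕ) : Prop := DividesBA B m n ∧ DividesBA B n m

/-- The extension `B ⊆ A` has depth `d`: depth `2n+1` (`n ≥ 0`) means
`C_{n+1} ∼ C_n` as `B`-`B`-bimodules, and right (resp. left) depth `2n` (`n ≥ 1`)
means `C_{n+1} ∼ C_n` as `A`-`B`- (resp. `B`-`A`-) bimodules. -/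
def HasDepth (B : Subring A) (d : ℕ) : Prop :=
  (∃ n : ℕ, d = 2 * n + 1 ∧ HequivBB B (n+1) n) ∨
  (∃ n : ℕ, d = 2 * (n+1) ∧ (HequivAB B (n+1) n ∨ HequivBA B (n+1) n))

/-- The minimum depth `d(B,A) ∈ ℕ∞` of the subring extension `B ⊆ A`. -/
noncomputable def depth (B : Subring A) : ℕ∞ :=
  sInf {d : ℕ∞ | ∃ m : ℕ, HasDepth B m ∧ d = (m : ℕ∞)}

/-- The ring `T_n(K)` of lower triangular `n × n` matrices, as a subring of the
full matrix ring. -/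
def lowerTriangularRing (n : ℕ) (K : Type u) [Field K] :
    Subring (Matrix (Fin n) (Fin n) K) where
  carrier := {x | ∀ i j : Fin n, i < j → x i j = 0}
  zero_mem' := fun i j _ => rfl
  one_mem' := fun i j h => Matrix.one_apply_ne (ne_of_lt h)
  add_mem' := fun {x y} hx hy i j h => by
    simp only [Matrix.add_apply, hx i j h, hy i j h, add_zero]
  neg_mem' := fun {x} hx i j h => by
    simp only [Matrix.neg_apply, hx i j h, neg_zero]
  mul_mem' := fun {x y} hx hy i j hij => by
    rw [Matrix.mul_apply]
    refine Finset.sum_eq_zero fun k _ => ?_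
    rcases lt_or_ge i k with h | h
    · rw [hx i k h, zero_mul]
    · rw [hy k j (lt_of_le_of_lt h hij), mul_zero]

/-- The subring `D_n(K) ⊆ T_n(K)` of diagonal matrices. -/
def diagonalSubring (n : ℕ) (K : Type u) [Field K] :
    Subring ↥(lowerTriangularRing n K) where
  carrier := {x | ∀ i j : Fin n, i ≠ j → (x : Matrix (Fin n) (Fin n) K) i j = 0}
  zero_mem' := fun i j _ => rfl
  one_mem' := fun i j h => Matrix.one_apply_ne h
  add_mem' := fun {x y} hx hy i j h => by
    show ((x : Matrix (Fin n) (Fin n) K) + y) i j = 0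
    simp only [Matrix.add_apply, hx i j h, hy i j h, add_zero]
  neg_mem' := fun {x} hx i j h => by
    show (-(x : Matrix (Fin n) (Fin n) K)) i j = 0
    simp only [Matrix.neg_apply, hx i j h, neg_zero]
  mul_mem' := fun {x y} hx hy i j hij => by
    show ((x : Matrix (Fin n) (Fin n) K) * y) i j = 0
    rw [Matrix.mul_apply]
    refine Finset.sum_eq_zero fun k _ => ?_
    rcases eq_or_ne i k with rfl | h
    · rw [hy i j hij, mul_zero]
    · rw [hx i k h, zero_mul]

/-!
Write `T = T_n(K)`, `D = D_n(K)`, `e_j` for the diagonal matrix units and `E_ij` for the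
matrix units of `T`.

Depth 3: the `e_j` are orthogonal idempotents of `D` summing to `1`, so
`x ⊗ y = ∑_j x e_j ⊗ e_j y` in `T ⊗_D T`, and the `D`-`D`-maps `x ⊗ y ↦ x e_j y` to `T`
are jointly split by `c ↦ ∑_{i,l} c_il E_ij ⊗ E_jl` (scalars pass through `⊗_D`); hence
`C_2 ∣ n C_1`, while `C_1 ∣ C_2` holds for every extension.

Depth at most 2 fails because of `E_10`. In `C_1 = T` it satisfies `e_1 E_10 e_0 = E_10`,
while `e_1 D e_0 = 0`, so every `D`-`D`-map `T → D` kills it. In `C_2` the element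
`e_1 ⊗ E_10` is fixed by `e_0` on the right, so a `T`-`D`-splitting through copies of `T`
writes it as a sum of elements `w Y` with `w e_0 = w`; the balanced functional
`x ⊗ y ↦ x_11 y_10` kills all of these but not `e_1 ⊗ E_10`. The `D`-`T` case is symmetric,
with `E_10 ⊗ e_0` and `x ⊗ y ↦ x_10 y_00`.
-/

section

variable {A : Type u} [Ring A] (B : Subring A) {N : Type*} [AddCommGroup N] [Module ℤ N]

theorem rel_zero : rel B 0 = ⊥ := rfl

theorem rel_one_le_ker (F : A ⊗[ℤ] A →ₗ[ℤ] N)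
    (hF : ∀ (a : A) (b : B) (t : A), F ((a * b) ⊗ₜ t) = F (a ⊗ₜ (b * t))) :
    rel B 1 ≤ LinearMap.ker F := by
  refine Submodule.span_le.mpr ?_
  rintro _ (⟨a, b, (t : A), rfl⟩ | ⟨a, r, hr, rfl⟩)
  · have : F ((a * b) ⊗ₜ t - a ⊗ₜ (b * t)) = 0 := by rw [map_sub, hF, sub_self]
    exact this
  · rw [rel_zero, Submodule.mem_bot] at hr
    subst hr
    have : F (a ⊗ₜ (0 : A)) = 0 := by rw [tmul_zero, map_zero]
    exact this

end

namespace CC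

variable {A : Type u} [Ring A] (B : Subring A) {N : Type*} [AddCommGroup N] [Module ℤ N]

noncomputable def mk₁ : A →ₗ[ℤ] CC B 1 := (rel B 0).mkQ

noncomputable def mk₂ : A ⊗[ℤ] A →ₗ[ℤ] CC B 2 := (rel B 1).mkQ

theorem mk₁_injective : Function.Injective (mk₁ B) := fun _ _ h =>
  sub_eq_zero.mp ((Submodule.Quotient.eq (rel B 0)).mp h)

theorem mk₁_surjective : Function.Surjective (mk₁ B) := (rel B 0).mkQ_surjective

theorem hom_ext₂ {f g : CC B 2 →ₗ[ℤ] N}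
    (h : ∀ x y : A, f (mk₂ B (x ⊗ₜ y)) = g (mk₂ B (x ⊗ₜ y))) : f = g :=
  Submodule.linearMap_qext _ (TensorProduct.ext' h)

theorem mk₂_mul_tmul (a : A) (b : B) (t : A) :
    mk₂ B ((a * b) ⊗ₜ t) = mk₂ B (a ⊗ₜ (b * t)) :=
  (Submodule.Quotient.eq (rel B 1)).mpr (Submodule.subset_span (Or.inl ⟨a, b, t, rfl⟩))

noncomputable def lift₁ (F : A →ₗ[ℤ] N) : CC B 1 →ₗ[ℤ] N :=
  (rel B 0).liftQ F bot_le

theorem lift₁_mk₁ (F : A →ₗ[ℤ] N) (a : A) :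
    lift₁ B F (mk₁ B a) = F a := rfl

noncomputable def lift₂ (F : A ⊗[ℤ] A →ₗ[ℤ] N)
    (hF : ∀ (a : A) (b : B) (t : A), F ((a * b) ⊗ₜ t) = F (a ⊗ₜ (b * t))) :
    CC B 2 →ₗ[ℤ] N :=
  (rel B 1).liftQ F (rel_one_le_ker B F hF)

theorem lA_mk₁ (a x : A) : lA B a 0 (mk₁ B x) = mk₁ B (a * x) := rfl

theorem rA_mk₁ (a x : A) : rA B a 0 (mk₁ B x) = mk₁ B (x * a) := rfl

theorem lB_mk₁ (b : B) (x : A) : lB B b 1 (mk₁ B x) = mk₁ B (b * x) := rfl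

theorem rB_mk₁ (b : B) (x : A) : rB B b 1 (mk₁ B x) = mk₁ B (x * b) := rfl

theorem lA_mk₂ (a x y : A) : lA B a 1 (mk₂ B (x ⊗ₜ y)) = mk₂ B ((a * x) ⊗ₜ y) := rfl

theorem rA_mk₂ (a x y : A) : rA B a 1 (mk₂ B (x ⊗ₜ y)) = mk₂ B (x ⊗ₜ (y * a)) := rfl

theorem lB_mk₂ (b : B) (x y : A) :
    lB B b 2 (mk₂ B (x ⊗ₜ y)) = mk₂ B ((b * x) ⊗ₜ y) := rfl

theorem rB_mk₂ (b : B) (x y : A) :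
    rB B b 2 (mk₂ B (x ⊗ₜ y)) = mk₂ B (x ⊗ₜ (y * b)) := rfl

end CC

open CC

section

variable {A : Type u} [Ring A] (B : Subring A)

theorem isBBHom_of_mk₁ {m : ℕ} (f : CC B 1 →ₗ[ℤ] CC B m)
    (hl : ∀ (b : B) (x : A), f (mk₁ B (b * x)) = lB B b m (f (mk₁ B x)))
    (hr : ∀ (b : B) (x : A), f (mk₁ B (x * b)) = rB B b m (f (mk₁ B x))) :
    IsBBHom B f := by
  intro b
  constructor <;> intro z <;> obtain ⟨x, rfl⟩ := mk₁_surjective B z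
  exacts [hl b x, hr b x]

theorem isBBHom_of_mk₂ {m : ℕ} (f : CC B 2 →ₗ[ℤ] CC B m)
    (hl : ∀ (b : B) (x y : A),
      f (mk₂ B ((b * x) ⊗ₜ y)) = lB B b m (f (mk₂ B (x ⊗ₜ y))))
    (hr : ∀ (b : B) (x y : A),
      f (mk₂ B (x ⊗ₜ (y * b))) = rB B b m (f (mk₂ B (x ⊗ₜ y)))) :
    IsBBHom B f := fun b =>
  ⟨LinearMap.congr_fun (hom_ext₂ B (f := f ∘ₗ lB B b 2) (g := lB B b m ∘ₗ f) (hl b)),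
    LinearMap.congr_fun (hom_ext₂ B (f := f ∘ₗ rB B b 2) (g := rB B b m ∘ₗ f) (hr b))⟩

noncomputable def sandwich (e : A) : A ⊗[ℤ] A →ₗ[ℤ] A :=
  TensorProduct.lift ((LinearMap.mul ℤ A).comp (LinearMap.mulRight ℤ e))

theorem sandwich_tmul (e x y : A) : sandwich e (x ⊗ₜ y) = x * e * y := rfl

variable {B} in
noncomputable def sandwichMap {e : A} (he : ∀ b : B, (b : A) * e = e * b) :
    CC B 2 →ₗ[ℤ] CC B 1 :=
  lift₂ B (mk₁ B ∘ₗ sandwich e) fun a b t => by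
    simp only [LinearMap.comp_apply, sandwich_tmul, mul_assoc, he]

theorem sandwichMap_mk₂ {e : A} (he : ∀ b : B, (b : A) * e = e * b) (x y : A) :
    sandwichMap he (mk₂ B (x ⊗ₜ y)) = mk₁ B (x * e * y) := rfl

theorem isBBHom_sandwichMap {e : A} (he : ∀ b : B, (b : A) * e = e * b) :
    IsBBHom B (sandwichMap he) :=
  isBBHom_of_mk₂ B _ (fun b x y => by simp only [sandwichMap_mk₂, lB_mk₁, mul_assoc])
    fun b x y => by simp only [sandwichMap_mk₂, rB_mk₁, mul_assoc]

theorem dividesBB_one_two : DividesBB B 1 2 := by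
  refine ⟨1, fun _ => lift₁ B (mk₂ B ∘ₗ (TensorProduct.mk ℤ A A).flip 1),
    fun _ => sandwichMap (e := 1) (fun b => by rw [mul_one, one_mul]), fun _ => ?_,
    fun _ => isBBHom_sandwichMap B _, ?_⟩
  · refine isBBHom_of_mk₁ B _ (fun b x => rfl) fun b x => ?_
    show mk₂ B ((x * b) ⊗ₜ 1) = mk₂ B (x ⊗ₜ (1 * b))
    rw [mk₂_mul_tmul, mul_one, one_mul]
  · rw [Fin.sum_univ_one]
    refine Submodule.linearMap_qext _ (LinearMap.ext fun (a : A) => ?_)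
    show mk₁ B (a * 1 * 1) = mk₁ B a
    rw [mul_one, mul_one]

theorem mk₂_tmul_eq_sum {ι : Type*} [Fintype ι] (e : ι → B) (he : ∑ j, e j = 1)
    (he' : ∀ j, e j * e j = e j) (x y : A) :
    mk₂ B (x ⊗ₜ y) = ∑ j, mk₂ B ((x * e j) ⊗ₜ ((e j : A) * y)) := by
  have hx : x = ∑ j, x * e j := by
    rw [← Finset.mul_sum, ← AddSubmonoidClass.coe_finsetSum, he, OneMemClass.coe_one, mul_one]
  conv_lhs => rw [hx, sum_tmul, map_sum]
  refine Finset.sum_congr rfl fun j _ => ?_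
  rw [← mk₂_mul_tmul, mul_assoc, ← MulMemClass.coe_mul, he']

variable {B}

theorem DividesBB.eq_zero_of_corner (h : DividesBB B 1 0) {e e' : B}
    (hB : ∀ d : B, e' * (d * e) = 0) {x : A} (hl : (e' : A) * x = x) (hr : x * e = x) :
    x = 0 := by
  obtain ⟨r, f, g, hf, -, hsum⟩ := h
  have hf0 : ∀ i, f i (mk₁ B x) = 0 := fun i =>
    calc f i (mk₁ B x) = lB B e' 0 (rB B e 0 (f i (mk₁ B x))) := by
          rw [← (hf i e).2, ← (hf i e').1, rB_mk₁, lB_mk₁, hr, hl]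
      _ = 0 := hB _
  apply mk₁_injective B
  rw [map_zero, ← LinearMap.id_apply (R := ℤ) (mk₁ B x), ← hsum, LinearMap.sum_apply]
  exact Finset.sum_eq_zero fun i _ => by rw [LinearMap.comp_apply, hf0, map_zero]

theorem DividesAB.apply_eq_zero (h : DividesAB B 1 0) {M : Type*} [AddCommGroup M] [Module ℤ M]
    (φ : CC B 2 →ₗ[ℤ] M) {e : B} (hφ : ∀ w : A, w * e = w → ∀ Y, φ (lA B w 1 Y) = 0)
    {X : CC B 2} (hX : rB B e 2 X = X) : φ X = 0 := by
  obtain ⟨r, f, g, hf, hg, hsum⟩ := h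
  rw [← LinearMap.id_apply (R := ℤ) X, ← hsum, LinearMap.sum_apply, map_sum]
  refine Finset.sum_eq_zero fun i _ => ?_
  obtain ⟨w, hw⟩ := mk₁_surjective B (f i X)
  have hwe : w * e = w := mk₁_injective B (by rw [← rB_mk₁, hw, ← (hf i).2, hX])
  rw [LinearMap.comp_apply, ← hw, ← hwe, ← lA_mk₁, (hg i).1]
  exact hφ w hwe _

theorem DividesBA.apply_eq_zero (h : DividesBA B 1 0) {M : Type*} [AddCommGroup M] [Module ℤ M]
    (φ : CC B 2 →ₗ[ℤ] M) {e : B} (hφ : ∀ w : A, e * w = w → ∀ Y, φ (rA B w 1 Y) = 0)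
    {X : CC B 2} (hX : lB B e 2 X = X) : φ X = 0 := by
  obtain ⟨r, f, g, hf, hg, hsum⟩ := h
  rw [← LinearMap.id_apply (R := ℤ) X, ← hsum, LinearMap.sum_apply, map_sum]
  refine Finset.sum_eq_zero fun i _ => ?_
  obtain ⟨w, hw⟩ := mk₁_surjective B (f i X)
  have hew : e * w = w := mk₁_injective B (by rw [← lB_mk₁, hw, ← (hf i).1, hX])
  rw [LinearMap.comp_apply, ← hw, ← hew, ← rA_mk₁, (hg i).2]
  exact hφ w hew _

theorem three_le_of_hasDepth (h10 : ¬ DividesBB B 1 0) (hAB : ¬ DividesAB B 1 0)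
    (hBA : ¬ DividesBA B 1 0) {m : ℕ} (hm : HasDepth B m) : 3 ≤ m := by
  rcases hm with ⟨_ | k, rfl, h⟩ | ⟨_ | k, rfl, h⟩
  · exact absurd h.1 h10
  · omega
  · exact h.elim (absurd ·.1 hAB) (absurd ·.1 hBA)
  · omega

theorem depth_eq_three (h21 : DividesBB B 2 1) (h10 : ¬ DividesBB B 1 0)
    (hAB : ¬ DividesAB B 1 0) (hBA : ¬ DividesBA B 1 0) : depth B = 3 := by
  have h3 : HasDepth B 3 := Or.inl ⟨1, rfl, h21, dividesBB_one_two B⟩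
  refine le_antisymm (sInf_le ⟨3, h3, rfl⟩) (le_sInf ?_)
  rintro _ ⟨m, hm, rfl⟩
  exact_mod_cast three_le_of_hasDepth h10 hAB hBA hm

end

section Triangular

variable {K : Type u} [Field K] {n : ℕ}

local notation "𝒯" => Subtype (· ∈ lowerTriangularRing n K)
local notation "𝒟" => Subtype (· ∈ diagonalSubring n K)

def diagOf (d : Fin n → K) : 𝒟 :=
  ⟨⟨Matrix.diagonal d, fun _ _ h => Matrix.diagonal_apply_ne _ h.ne⟩,
    fun _ _ h => Matrix.diagonal_apply_ne _ h⟩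

theorem coe_diagOf (d : Fin n → K) :
    ((diagOf d : 𝒯) : Matrix (Fin n) (Fin n) K) = Matrix.diagonal d := rfl

theorem coe_diagOf_apply_self (d : Fin n → K) (i : Fin n) :
    ((diagOf d : 𝒯) : Matrix (Fin n) (Fin n) K) i i = d i :=
  Matrix.diagonal_apply_eq d i

theorem eq_diagOf (b : 𝒟) : b = diagOf fun i => (b : Matrix (Fin n) (Fin n) K) i i := by
  refine Subtype.ext (Subtype.ext (Matrix.ext fun i j => ?_))
  rw [coe_diagOf]
  rcases eq_or_ne i j with rfl | h
  · rw [Matrix.diagonal_apply_eq]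
  · rw [Matrix.diagonal_apply_ne _ h, b.2 i j h]

theorem diagOf_mul_diagOf (d d' : Fin n → K) : diagOf d * diagOf d' = diagOf (d * d') :=
  Subtype.ext (Subtype.ext (Matrix.diagonal_mul_diagonal d d'))

theorem diagonalSubring_mul_comm (b c : 𝒟) : b * c = c * b := by
  rw [eq_diagOf b, eq_diagOf c, diagOf_mul_diagOf, diagOf_mul_diagOf, mul_comm]

theorem coe_diag_mul_apply (b : 𝒟) (x : 𝒯) (p q : Fin n) :
    ((b * x : 𝒯) : Matrix (Fin n) (Fin n) K) p q =
      (b : Matrix (Fin n) (Fin n) K) p p * (x : Matrix (Fin n) (Fin n) K) p q := by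
  conv_lhs => rw [eq_diagOf b]
  rw [Subring.coe_mul, coe_diagOf, Matrix.diagonal_mul]

theorem coe_mul_diag_apply (x : 𝒯) (b : 𝒟) (p q : Fin n) :
    ((x * b : 𝒯) : Matrix (Fin n) (Fin n) K) p q =
      (x : Matrix (Fin n) (Fin n) K) p q * (b : Matrix (Fin n) (Fin n) K) q q := by
  conv_lhs => rw [eq_diagOf b]
  rw [Subring.coe_mul, coe_diagOf, Matrix.mul_diagonal]

variable (K) in
def diagSingle (j : Fin n) : 𝒟 := diagOf (Pi.single j 1)

theorem sum_diagSingle : ∑ j, diagSingle K (n := n) j = 1 := by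
  refine Subtype.ext (Subtype.ext ?_)
  simp only [AddSubmonoidClass.coe_finsetSum, diagSingle, coe_diagOf, Matrix.diagonal_single]
  exact Matrix.sum_single_one

theorem diagSingle_mul_self (j : Fin n) : diagSingle K j * diagSingle K j = diagSingle K j := by
  rw [diagSingle, diagOf_mul_diagOf, ← Pi.single_mul, mul_one]

theorem coe_diagSingle_apply_self (j p : Fin n) :
    ((diagSingle K j : 𝒯) : Matrix (Fin n) (Fin n) K) p p = (Pi.single j 1 : Fin n → K) p :=
  Matrix.diagonal_apply_eq _ p

theorem diagSingle_commute (j : Fin n) (b : 𝒟) :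
    (b : 𝒯) * (diagSingle K j : 𝒯) = (diagSingle K j : 𝒯) * b :=
  congrArg Subtype.val (diagonalSubring_mul_comm b (diagSingle K j))

/-- `k E_ij` in `T_n(K)`, and `0` when `i < j`: this keeps sums over all index pairs total. -/
def lowerSingle (i j : Fin n) (k : K) : 𝒯 :=
  ⟨Matrix.single i j (if j ≤ i then k else 0), fun p q hpq => by
    rw [Matrix.single_apply]
    split_ifs with h h'
    · exact absurd (h.1 ▸ h.2 ▸ hpq) (not_lt.mpr h')
    all_goals rfl⟩

theorem coe_lowerSingle (i j : Fin n) (k : K) :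
    ((lowerSingle i j k : 𝒯) : Matrix (Fin n) (Fin n) K) =
      Matrix.single i j (if j ≤ i then k else 0) := rfl

theorem coe_lowerSingle_apply_same {i j : Fin n} (h : j ≤ i) (k : K) :
    ((lowerSingle i j k : 𝒯) : Matrix (Fin n) (Fin n) K) i j = k := by
  rw [coe_lowerSingle, Matrix.single_apply_same, if_pos h]

theorem lowerSingle_add (i j : Fin n) (k k' : K) :
    lowerSingle i j (k + k') = lowerSingle i j k + lowerSingle i j k' := by
  refine Subtype.ext ?_
  rw [AddMemClass.coe_add, coe_lowerSingle, coe_lowerSingle, coe_lowerSingle, ← Matrix.single_add]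
  split_ifs <;> simp

theorem diag_mul_lowerSingle (b : 𝒟) (i j : Fin n) (k : K) :
    (b : 𝒯) * lowerSingle i j k = lowerSingle i j ((b : Matrix (Fin n) (Fin n) K) i i * k) := by
  refine Subtype.ext (Matrix.ext fun p q => ?_)
  rw [coe_diag_mul_apply, coe_lowerSingle, coe_lowerSingle]
  by_cases h : i = p ∧ j = q
  · obtain ⟨rfl, rfl⟩ := h
    split_ifs <;> simp
  · rw [Matrix.single_apply, Matrix.single_apply, if_neg h, if_neg h, mul_zero]

theorem lowerSingle_mul_diag (b : 𝒟) (i j : Fin n) (k : K) :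
    lowerSingle i j k * b = lowerSingle i j (k * (b : Matrix (Fin n) (Fin n) K) j j) := by
  refine Subtype.ext (Matrix.ext fun p q => ?_)
  rw [coe_mul_diag_apply, coe_lowerSingle, coe_lowerSingle]
  by_cases h : i = p ∧ j = q
  · obtain ⟨rfl, rfl⟩ := h
    split_ifs <;> simp
  · rw [Matrix.single_apply, Matrix.single_apply, if_neg h, if_neg h, zero_mul]

theorem diagSingle_mul_lowerSingle (i j : Fin n) (k : K) :
    (diagSingle K i : 𝒯) * lowerSingle i j k = lowerSingle i j k := by
  rw [diag_mul_lowerSingle, coe_diagSingle_apply_self, Pi.single_eq_same, one_mul]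

theorem lowerSingle_mul_diagSingle (i j : Fin n) (k : K) :
    lowerSingle i j k * (diagSingle K j : 𝒯) = lowerSingle i j k := by
  rw [lowerSingle_mul_diag, coe_diagSingle_apply_self, Pi.single_eq_same, mul_one]

theorem mul_diagSingle_eq_sum (x : 𝒯) (j : Fin n) :
    x * (diagSingle K j : 𝒯) = ∑ i, lowerSingle i j ((x : Matrix (Fin n) (Fin n) K) i j) := by
  refine Subtype.ext (Matrix.ext fun p q => ?_)
  rw [coe_mul_diag_apply, AddSubmonoidClass.coe_finsetSum, Matrix.sum_apply,
    Finset.sum_eq_single p (fun i _ hi => by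
      rw [coe_lowerSingle, Matrix.single_apply_of_row_ne hi])
      (by simp), coe_lowerSingle, coe_diagSingle_apply_self]
  rcases eq_or_ne q j with rfl | hq
  · rw [Pi.single_eq_same, mul_one, Matrix.single_apply_same]
    split_ifs with h
    · rfl
    · exact x.2 p q (not_le.mp h)
  · rw [Pi.single_eq_of_ne hq, mul_zero, Matrix.single_apply_of_col_ne _ _ hq.symm]

theorem diagSingle_mul_eq_sum (j : Fin n) (y : 𝒯) :
    (diagSingle K j : 𝒯) * y = ∑ l, lowerSingle j l ((y : Matrix (Fin n) (Fin n) K) j l) := by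
  refine Subtype.ext (Matrix.ext fun p q => ?_)
  rw [coe_diag_mul_apply, AddSubmonoidClass.coe_finsetSum, Matrix.sum_apply,
    Finset.sum_eq_single q (fun l _ hl => by
      rw [coe_lowerSingle, Matrix.single_apply_of_col_ne _ _ hl])
      (by simp), coe_lowerSingle, coe_diagSingle_apply_self]
  rcases eq_or_ne p j with rfl | hp
  · rw [Pi.single_eq_same, one_mul, Matrix.single_apply_same]
    split_ifs with h
    · rfl
    · exact y.2 p q (not_le.mp h)
  · rw [Pi.single_eq_of_ne hp, zero_mul, Matrix.single_apply_of_row_ne hp.symm]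

theorem coe_mul_diagSingle_mul_apply (x y : 𝒯) (j p q : Fin n) :
    ((x * (diagSingle K j : 𝒯) * y : 𝒯) : Matrix (Fin n) (Fin n) K) p q =
      (x : Matrix (Fin n) (Fin n) K) p j * (y : Matrix (Fin n) (Fin n) K) j q := by
  rw [Subring.coe_mul, Subring.coe_mul, diagSingle, coe_diagOf, Matrix.mul_apply,
    Finset.sum_eq_single j (fun m _ hm => by
      rw [Matrix.mul_diagonal, Pi.single_eq_of_ne hm, mul_zero, zero_mul]) (by simp),
    Matrix.mul_diagonal, Pi.single_eq_same, mul_one]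

theorem mk₂_lowerSingle_mul_tmul (i j l : Fin n) (k k' : K) :
    mk₂ (diagonalSubring n K) (lowerSingle i j (k * k') ⊗ₜ lowerSingle j l 1) =
      mk₂ (diagonalSubring n K) (lowerSingle i j k ⊗ₜ lowerSingle j l k') := by
  have h := mk₂_mul_tmul (diagonalSubring n K) (lowerSingle i j k) (diagOf fun _ => k')
    (lowerSingle j l 1)
  rwa [lowerSingle_mul_diag, diag_mul_lowerSingle, coe_diagOf_apply_self, mul_one] at h

noncomputable def sandwichSection (j : Fin n) : 𝒯 →ₗ[ℤ] 𝒯 ⊗[ℤ] 𝒯 :=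
  (AddMonoidHom.mk'
    (fun c : 𝒯 => ∑ i, ∑ l,
      lowerSingle i j ((c : Matrix (Fin n) (Fin n) K) i l) ⊗ₜ[ℤ] lowerSingle j l 1)
    fun c c' => by
      simp only [AddMemClass.coe_add, Matrix.add_apply, lowerSingle_add, add_tmul,
        Finset.sum_add_distrib]).toIntLinearMap

theorem sandwichSection_apply (j : Fin n) (c : 𝒯) :
    sandwichSection j c = ∑ i, ∑ l,
      lowerSingle i j ((c : Matrix (Fin n) (Fin n) K) i l) ⊗ₜ lowerSingle j l 1 := rfl

theorem isBBHom_sandwichSection (j : Fin n) :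
    IsBBHom (diagonalSubring n K) (lift₁ _ (mk₂ _ ∘ₗ sandwichSection (K := K) j)) := by
  refine isBBHom_of_mk₁ _ _ (fun b c => ?_) fun b c => ?_
  · simp only [lift₁_mk₁, LinearMap.comp_apply, sandwichSection_apply, map_sum, lB_mk₂,
      diag_mul_lowerSingle, coe_diag_mul_apply]
  · simp only [lift₁_mk₁, LinearMap.comp_apply, sandwichSection_apply, map_sum, rB_mk₂,
      lowerSingle_mul_diag, coe_mul_diag_apply, mk₂_lowerSingle_mul_tmul, one_mul]

theorem diagonalSubring_dividesBB_two_one : DividesBB (diagonalSubring n K) 2 1 := by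
  refine ⟨n, fun j => sandwichMap (diagSingle_commute j),
    fun j => lift₁ _ (mk₂ _ ∘ₗ sandwichSection j),
    fun j => isBBHom_sandwichMap _ _, isBBHom_sandwichSection, hom_ext₂ _ fun x y => ?_⟩
  rw [LinearMap.id_apply, LinearMap.sum_apply]
  conv_rhs => rw [mk₂_tmul_eq_sum _ _ sum_diagSingle diagSingle_mul_self]
  refine Finset.sum_congr rfl fun j _ => ?_
  dsimp only
  rw [LinearMap.comp_apply, sandwichMap_mk₂, lift₁_mk₁, LinearMap.comp_apply,
    sandwichSection_apply]
  simp only [coe_mul_diagSingle_mul_apply]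
  rw [mul_diagSingle_eq_sum, diagSingle_mul_eq_sum, sum_tmul, map_sum, map_sum]
  refine Finset.sum_congr rfl fun i _ => ?_
  rw [tmul_sum, map_sum, map_sum]
  exact Finset.sum_congr rfl fun l _ => mk₂_lowerSingle_mul_tmul i j l _ _

theorem diagSingle_mul_mul_diagSingle {i j : Fin n} (hij : i ≠ j) (d : 𝒟) :
    diagSingle K j * (d * diagSingle K i) = 0 := by
  rw [eq_diagOf d, diagSingle, diagSingle, diagOf_mul_diagOf, diagOf_mul_diagOf]
  refine Subtype.ext (Subtype.ext (Matrix.diagonal_eq_zero.mpr (funext fun p => ?_)))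
  rcases eq_or_ne p j with rfl | hp
  · simp [Pi.single_eq_of_ne hij.symm]
  · simp [Pi.single_eq_of_ne hp]

theorem diagonalSubring_not_dividesBB_one_zero {i j : Fin n} (hij : i < j) :
    ¬ DividesBB (diagonalSubring n K) 1 0 := fun h => by
  have h0 := h.eq_zero_of_corner (diagSingle_mul_mul_diagSingle hij.ne)
    (diagSingle_mul_lowerSingle j i (1 : K)) (lowerSingle_mul_diagSingle j i 1)
  have := coe_lowerSingle_apply_same hij.le (1 : K)
  rw [h0] at this
  exact zero_ne_one this

def lowerEntry (p q : Fin n) : 𝒯 →ₗ[ℤ] K :=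
  ((Matrix.entryAddMonoidHom K p q).comp
    (lowerTriangularRing n K).subtype.toAddMonoidHom).toIntLinearMap

noncomputable def entryPairing (p q s : Fin n) : CC (diagonalSubring n K) 2 →ₗ[ℤ] K :=
  lift₂ _
    (TensorProduct.lift ((LinearMap.mul ℤ K).compl₁₂ (lowerEntry p q) (lowerEntry q s)))
    fun x b y => by
      show ((x * (b : 𝒯) : 𝒯) : Matrix (Fin n) (Fin n) K) p q * (y : Matrix _ _ K) q s =
        (x : Matrix _ _ K) p q * (((b : 𝒯) * y : 𝒯) : Matrix (Fin n) (Fin n) K) q s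
      rw [coe_mul_diag_apply, coe_diag_mul_apply, mul_assoc]

theorem entryPairing_mk₂ (p q s : Fin n) (x y : 𝒯) :
    entryPairing p q s (mk₂ _ (x ⊗ₜ y)) =
      (x : Matrix (Fin n) (Fin n) K) p q * (y : Matrix (Fin n) (Fin n) K) q s := rfl

theorem entryPairing_lA_eq_zero {p q s j : Fin n} (hjq : j < q) {w : 𝒯}
    (hw : w * (diagSingle K j : 𝒯) = w) (Y : CC (diagonalSubring n K) 2) :
    entryPairing p q s (lA _ w 1 Y) = 0 := by
  refine LinearMap.congr_fun (hom_ext₂ _ (f := entryPairing p q s ∘ₗ lA _ w 1) (g := 0)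
    fun x y => ?_) Y
  rw [LinearMap.comp_apply, lA_mk₂, entryPairing_mk₂, ← hw, coe_mul_diagSingle_mul_apply,
    x.2 j q hjq, mul_zero, zero_mul, LinearMap.zero_apply]

theorem entryPairing_rA_eq_zero {p q s j : Fin n} (hqj : q < j) {w : 𝒯}
    (hw : (diagSingle K j : 𝒯) * w = w) (Y : CC (diagonalSubring n K) 2) :
    entryPairing p q s (rA _ w 1 Y) = 0 := by
  refine LinearMap.congr_fun (hom_ext₂ _ (f := entryPairing p q s ∘ₗ rA _ w 1) (g := 0)
    fun x y => ?_) Y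
  rw [LinearMap.comp_apply, rA_mk₂, entryPairing_mk₂, ← hw, ← mul_assoc,
    coe_mul_diagSingle_mul_apply, y.2 q j hqj, zero_mul, mul_zero, LinearMap.zero_apply]

theorem diagonalSubring_not_dividesAB_one_zero {i j : Fin n} (hij : i < j) :
    ¬ DividesAB (diagonalSubring n K) 1 0 := fun h => by
  have h0 := h.apply_eq_zero (entryPairing j j i) (fun w hw => entryPairing_lA_eq_zero hij hw)
    (X := mk₂ _ ((diagSingle K j : 𝒯) ⊗ₜ lowerSingle j i 1))
    (by rw [rB_mk₂, lowerSingle_mul_diagSingle])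
  rw [entryPairing_mk₂, coe_diagSingle_apply_self, Pi.single_eq_same,
    coe_lowerSingle_apply_same hij.le, one_mul] at h0
  exact one_ne_zero h0

theorem diagonalSubring_not_dividesBA_one_zero {i j : Fin n} (hij : i < j) :
    ¬ DividesBA (diagonalSubring n K) 1 0 := fun h => by
  have h0 := h.apply_eq_zero (entryPairing j i i) (fun w hw => entryPairing_rA_eq_zero hij hw)
    (X := mk₂ _ (lowerSingle j i 1 ⊗ₜ (diagSingle K i : 𝒯)))
    (by rw [lB_mk₂, diagSingle_mul_lowerSingle])
  rw [entryPairing_mk₂, coe_diagSingle_apply_self, Pi.single_eq_same,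
    coe_lowerSingle_apply_same hij.le, one_mul] at h0
  exact one_ne_zero h0

end Triangular

/-- For `n > 1`, the diagonal subalgebra `D_n(K)` of the lower
triangular matrix algebra `T_n(K)` has minimum depth `d(D_n(K), T_n(K)) = 3`. -/
theorem depth_diagonal_in_triangular (K : Type u) [Field K] (n : ℕ) (hn : 1 < n) :
    depth (diagonalSubring n K) = (3 : ℕ∞) := by
  have h01 : (⟨0, by omega⟩ : Fin n) < ⟨1, hn⟩ := Fin.mk_lt_mk.mpr zero_lt_one
  exact depth_eq_three diagonalSubring_dividesBB_two_one
    (diagonalSubring_not_dividesBB_one_zero h01) (diagonalSubring_not_dividesAB_one_zero h01)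
    (diagonalSubring_not_dividesBA_one_zero h01)
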